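/- arXiv:2511.20724 — 3 statements merged into one kernel-verified Lean document; each statement's English description precedes it below -/
import Mathlib

section
/- Let Γ = (U, V, E) be a locally finite bipartite graph and k ≥ 1 a natural number. Then Γ has a perfect (1,k)-matching if and only if for all finite subsets X ⊆ U and Y ⊆ V we have |N(X)| ≥ k·|X| and |N(Y)| ≥ (1/k)·|Y|. -/
open Function

/-- Right-neighborhood (in V) of a set of left vertices. -/
def NR (E : Set (ℕ × ℕ)) (X : Set ℕ) : Set ℕ := {v | ∃ u ∈ X, (u, v) ∈ E}

/-- Left-neighborhood (in U) of a set of right vertices. -/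
def NL (E : Set (ℕ × ℕ)) (Y : Set ℕ) : Set ℕ := {u | ∃ v ∈ Y, (u, v) ∈ E}

/-- Hall's d-harem condition for the bipartite graph (U, V, E). -/
def HallHarem (d : ℕ) (U V : Set ℕ) (E : Set (ℕ × ℕ)) : Prop :=
  (∀ X ⊆ U, X.Finite → d * X.ncard ≤ (NR E X).ncard) ∧
  (∀ Y ⊆ V, Y.Finite → Y.ncard ≤ d * (NL E Y).ncard)

/-- A perfect (1,d)-matching of the bipartite graph (U, V, E). -/
def PerfectMatching (d : ℕ) (U V : Set ℕ) (E M : Set (ℕ × ℕ)) : Prop :=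
  M ⊆ E ∧ (∀ u ∈ U, {v | (u, v) ∈ M}.ncard = d) ∧ (∀ v ∈ V, ∃! u, (u, v) ∈ M)

/-- A subset X of the right side V is connected (Kierstead): any two of its
elements are joined by a path all of whose vertices lie in X ∪ N(X). -/
def ConnectedSubset (E : Set (ℕ × ℕ)) (X : Set ℕ) : Prop :=
  ∀ x ∈ X, ∀ x' ∈ X, ∃ (k : ℕ) (p : ℕ → ℕ), p 0 = x ∧ p k = x' ∧
    (∀ i ≤ k, p i ∈ X ∪ NL E X) ∧
    (∀ i < k, (p i, p (i + 1)) ∈ E ∨ (p (i + 1), p i) ∈ E)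

/-- x is accessible from y through X by the matching M. -/
def Accessible (E M : Set (ℕ × ℕ)) (X : Set ℕ) (y x : ℕ) : Prop :=
  ∃ (n : ℕ) (v' u' : ℕ → ℕ),
    (∀ i ≤ n, v' i ∈ X) ∧ (∀ i < n, u' i ∈ NL E X) ∧ v' n = x ∧
    (y, v' 0) ∈ E ∧
    ∀ i < n, (u' i, v' i) ∈ M ∧ (u' i, v' (i + 1)) ∈ E ∧ (u' i, v' (i + 1)) ∉ M

/-- A bipartite graph with V ⊆ U ⊆ ℕ (V a subset of the right copy of U)
is U-reflected: whenever (u, v) ∈ E and the right copy v_u = u lies in V,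
also (u_v, v_u) = (v, u) ∈ E. -/
def UReflected (V : Set ℕ) (E : Set (ℕ × ℕ)) : Prop :=
  ∀ u v : ℕ, (u, v) ∈ E → u ∈ V → (v, u) ∈ E

/-- f has controlled sizes of its cycles. -/
def ControlledCycles (f : ℕ → ℕ) : Prop :=
  f^[2] 1 = 1 ∧
  (∀ n, 2 ≤ n → ∀ i, 1 ≤ i → f^[i] n = n →
      (∀ j, 1 ≤ j → j < i → f^[j] n ≠ n) → i ≤ n) ∧
  (∀ n, 2 ≤ n → (∀ i, 1 ≤ i → i ≤ n → f^[i] n ≠ n) →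
      ∃ k l, k ≤ 2 * n ∧ 1 ≤ l ∧ l ≤ n ∧ f^[k + l] n = f^[k] n)

/-- C is a cycle of f. -/
def IsCycleOf (f : ℕ → ℕ) (C : Set ℕ) : Prop :=
  ∃ u i, 1 ≤ i ∧ f^[i] u = u ∧ (∀ j, 1 ≤ j → j < i → f^[j] u ≠ u) ∧
    C = {x | ∃ j < i, f^[j] u = x}

/-- The set of vertices touched by a set of edges. -/
def Verts (S : Set (ℕ × ℕ)) : Set ℕ := {x | ∃ p ∈ S, p.1 = x ∨ p.2 = x}


lemma csb_graph {α β : Type*} (f : α → β) (g : β → α)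
    (hf : Injective f) (hg : Injective g) :
    ∃ h : α → β, Bijective h ∧ ∀ a, h a = f a ∨ g (h a) = a := by
  classical
  rcases isEmpty_or_nonempty β with hβ | hβ
  · refine ⟨f, ⟨hf, fun b => (hβ.false b).elim⟩, fun a => Or.inl rfl⟩
  set S : Set α := ⋃ n, (g ∘ f)^[n] '' (Set.range g)ᶜ with hSdef
  have hS0 : (Set.range g)ᶜ ⊆ S := by
    intro a ha; exact Set.mem_iUnion.2 ⟨0, by simpa using ha⟩
  have hstep : ∀ a ∈ S, g (f a) ∈ S := by
    intro a ha
    obtain ⟨n, x, hx, rfl⟩ := by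
      simpa only [hSdef, Set.mem_iUnion, Set.mem_image] using ha
    exact Set.mem_iUnion.2 ⟨n + 1, x, hx, by rw [Function.iterate_succ_apply']; rfl⟩
  have hmem : ∀ a, a ∉ S → a ∈ Set.range g := fun a ha => by
    by_contra h; exact ha (hS0 h)
  refine ⟨fun a => if a ∈ S then f a else Function.invFun g a, ⟨?_, ?_⟩, ?_⟩
  · intro a a' hee
    by_cases haS : a ∈ S <;> by_cases haS' : a' ∈ S <;>
      simp only [haS, haS', if_pos, if_neg, if_true, if_false] at hee
    · exact hf hee
    · exfalso
      have : g (f a) = a' := by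
        rw [hee]; exact Function.invFun_eq (hmem a' haS')
      exact haS' (this ▸ hstep a haS)
    · exfalso
      have : g (f a') = a := by
        rw [← hee]; exact Function.invFun_eq (hmem a haS)
      exact haS (this ▸ hstep a' haS')
    · have h1 := Function.invFun_eq (hmem a haS)
      have h2 := Function.invFun_eq (hmem a' haS')
      rw [← h1, ← h2, hee]
  · intro b
    by_cases hb : g b ∈ S
    · obtain ⟨n, x, hx, hxe⟩ := by
        simpa only [hSdef, Set.mem_iUnion, Set.mem_image] using hb
      cases n with
      | zero => exact absurd ⟨b, hxe.symm⟩ hx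
      | succ m =>
        rw [Function.iterate_succ_apply'] at hxe
        set a := (g ∘ f)^[m] x with ha
        have haS : a ∈ S := Set.mem_iUnion.2 ⟨m, x, hx, rfl⟩
        have hb' : f a = b := hg hxe
        exact ⟨a, by show (if a ∈ S then f a else Function.invFun g a) = b; rw [if_pos haS, hb']⟩
    · exact ⟨g b, by show (if g b ∈ S then f (g b) else Function.invFun g (g b)) = b; rw [if_neg hb, Function.leftInverse_invFun hg b]⟩
  · intro a
    by_cases haS : a ∈ S
    · exact Or.inl (if_pos haS)
    · right; show g (if a ∈ S then f a else Function.invFun g a) = a; rw [if_neg haS]; exact Function.invFun_eq (hmem a haS)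

lemma forward_dir (k : ℕ) (U V : Set ℕ) (E M : Set (ℕ × ℕ))
    (hE : ∀ p ∈ E, p.1 ∈ U ∧ p.2 ∈ V)
    (hlf : (∀ u : ℕ, {v | (u, v) ∈ E}.Finite) ∧ (∀ v : ℕ, {u | (u, v) ∈ E}.Finite))
    (hM : PerfectMatching k U V E M) : HallHarem k U V E := by
  classical
  obtain ⟨hME, hdeg, huniq⟩ := hM
  have hWfin : ∀ u : ℕ, {v | (u, v) ∈ M}.Finite := fun u =>
    (hlf.1 u).subset (fun v hv => hME hv)
  constructor
  · intro X hXU hX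
    have hNRfin : (NR E X).Finite := by
      apply (hX.biUnion (fun u _ => hlf.1 u)).subset
      rintro v ⟨u, hu, he⟩
      exact Set.mem_biUnion hu he
    have key : hX.toFinset.biUnion (fun u => (hWfin u).toFinset) ⊆ hNRfin.toFinset := by
      intro v hv
      simp only [Finset.mem_biUnion, Set.Finite.mem_toFinset] at hv ⊢
      obtain ⟨u, hu, hv⟩ := hv
      exact ⟨u, hu, hME hv⟩
    have hdisj : ∀ u ∈ hX.toFinset, ∀ u' ∈ hX.toFinset, u ≠ u' →
        Disjoint ((hWfin u).toFinset) ((hWfin u').toFinset) := by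
      intro u _ u' _ hne
      rw [Finset.disjoint_left]
      intro v hv hv'
      rw [Set.Finite.mem_toFinset] at hv hv'
      have hvV : v ∈ V := (hE _ (hME hv)).2
      obtain ⟨w, hw, huni⟩ := huniq v hvV
      exact hne ((huni u hv).trans (huni u' hv').symm)
    calc k * X.ncard = ∑ _u ∈ hX.toFinset, k := by
          rw [Finset.sum_const, smul_eq_mul, Set.ncard_eq_toFinset_card X hX, mul_comm]
      _ = ∑ u ∈ hX.toFinset, ((hWfin u).toFinset).card := by
          apply Finset.sum_congr rfl
          intro u hu
          rw [← Set.ncard_eq_toFinset_card _ (hWfin u),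
            hdeg u (hXU (hX.mem_toFinset.1 hu))]
      _ = (hX.toFinset.biUnion (fun u => (hWfin u).toFinset)).card :=
          (Finset.card_biUnion hdisj).symm
      _ ≤ hNRfin.toFinset.card := Finset.card_le_card key
      _ = (NR E X).ncard := (Set.ncard_eq_toFinset_card _ hNRfin).symm
  · intro Y hYV hY
    have hNLfin : (NL E Y).Finite := by
      apply (hY.biUnion (fun v _ => hlf.2 v)).subset
      rintro u ⟨v, hv, he⟩
      exact Set.mem_biUnion hv he
    set φ : ℕ → ℕ := fun v => if hv : v ∈ V then Exists.choose (huniq v hv).exists else 0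
      with hφ
    have hφM : ∀ v ∈ V, (φ v, v) ∈ M := by
      intro v hv
      simp only [hφ, dif_pos hv]
      exact (huniq v hv).exists.choose_spec
    rw [Set.ncard_eq_toFinset_card Y hY, Set.ncard_eq_toFinset_card _ hNLfin]
    apply Finset.card_le_mul_card_image_of_maps_to (f := φ) (t := hNLfin.toFinset)
    · intro v hv
      rw [Set.Finite.mem_toFinset] at hv ⊢
      exact ⟨v, hv, hME (hφM v (hYV hv))⟩
    · intro u hu
      rw [Set.Finite.mem_toFinset] at hu
      have huU : u ∈ U := by
        obtain ⟨v, hv, he⟩ := hu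
        exact (hE _ he).1
      calc ({v ∈ hY.toFinset | φ v = u}).card ≤ ((hWfin u).toFinset).card := by
            apply Finset.card_le_card
            intro v hv
            rw [Finset.mem_filter, Set.Finite.mem_toFinset] at hv
            rw [Set.Finite.mem_toFinset]
            obtain ⟨hvY, hvu⟩ := hv
            have := hφM v (hYV hvY)
            rwa [hvu] at this
        _ = k := by rw [← Set.ncard_eq_toFinset_card _ (hWfin u), hdeg u huU]

lemma backward_dir (k : ℕ) (hk : 1 ≤ k) (U V : Set ℕ) (E : Set (ℕ × ℕ))
    (hE : ∀ p ∈ E, p.1 ∈ U ∧ p.2 ∈ V)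
    (hlf : (∀ u : ℕ, {v | (u, v) ∈ E}.Finite) ∧ (∀ v : ℕ, {u | (u, v) ∈ E}.Finite))
    (HH : HallHarem k U V E) : ∃ M, PerfectMatching k U V E M := by
  classical
  obtain ⟨HL, HR⟩ := HH
  -- Step 1: matching saturating U with multiplicity k
  have hallL : ∀ s : Finset (↥U × Fin k),
      s.card ≤ (s.biUnion (fun a => (hlf.1 (a.1 : ℕ)).toFinset)).card := by
    intro s
    have h1 : s.card ≤ k * (s.image (fun a : ↥U × Fin k => (a.1 : ℕ))).card := by
      apply Finset.card_le_mul_card_image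
      intro b _
      calc ({a ∈ s | (a.1 : ℕ) = b}).card ≤ (Finset.univ : Finset (Fin k)).card := by
            apply Finset.card_le_card_of_injOn (fun a => a.2)
            · intro a _
              exact Finset.mem_univ _
            · intro a ha a' ha' h2
              simp only [Finset.coe_filter, Set.mem_setOf_eq] at ha ha'
              have h1' : a.1 = a'.1 := Subtype.ext (ha.2.trans ha'.2.symm)
              exact Prod.ext h1' h2
        _ = k := by rw [Finset.card_univ, Fintype.card_fin]
    have hXU : ↑(s.image (fun a : ↥U × Fin k => (a.1 : ℕ))) ⊆ U := by
      intro u hu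
      simp only [Finset.coe_image, Set.mem_image, Finset.mem_coe] at hu
      obtain ⟨a, _, rfl⟩ := hu
      exact a.1.2
    have h2 := HL _ hXU (Finset.finite_toSet _)
    rw [Set.ncard_coe_finset] at h2
    have hset : NR E ↑(s.image (fun a : ↥U × Fin k => (a.1 : ℕ)))
        = ↑(s.biUnion (fun a => (hlf.1 (a.1 : ℕ)).toFinset)) := by
      ext v
      simp only [NR, Set.mem_setOf_eq, Finset.coe_biUnion, Set.mem_iUnion,
        Finset.mem_coe, Finset.mem_biUnion, Set.Finite.mem_toFinset,
        Finset.coe_image, Set.mem_image]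
      constructor
      · rintro ⟨u, ⟨a, ha, rfl⟩, he⟩
        exact ⟨a, ha, he⟩
      · rintro ⟨a, ha, he⟩
        exact ⟨(a.1 : ℕ), ⟨a, ha, rfl⟩, he⟩
    rw [hset, Set.ncard_coe_finset] at h2
    exact h1.trans h2
  obtain ⟨f0, hf0inj, hf0mem⟩ :=
    (Finset.all_card_le_biUnion_card_iff_exists_injective
      (fun a : ↥U × Fin k => (hlf.1 (a.1 : ℕ)).toFinset)).1 hallL
  have hf0E : ∀ a : ↥U × Fin k, ((a.1 : ℕ), f0 a) ∈ E := by
    intro a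
    exact (hlf.1 (a.1 : ℕ)).mem_toFinset.1 (hf0mem a)
  have hf0V : ∀ a, f0 a ∈ V := fun a => (hE _ (hf0E a)).2
  -- Step 2: matching saturating V with defect at most k
  have hallR : ∀ s : Finset ↥V,
      s.card ≤ (s.biUnion (fun v => (hlf.2 (v : ℕ)).toFinset ×ˢ
        (Finset.univ : Finset (Fin k)))).card := by
    intro s
    have hbU : s.biUnion (fun v => (hlf.2 (v : ℕ)).toFinset ×ˢ
          (Finset.univ : Finset (Fin k)))
        = (s.biUnion fun v => (hlf.2 (v : ℕ)).toFinset) ×ˢ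
          (Finset.univ : Finset (Fin k)) := by
      ext p
      simp only [Finset.mem_biUnion, Finset.mem_product, Finset.mem_univ, and_true]
    rw [hbU, Finset.card_product, Finset.card_univ, Fintype.card_fin]
    have hYV : ↑(s.image (Subtype.val : ↥V → ℕ)) ⊆ V := by
      intro v hv
      simp only [Finset.coe_image, Set.mem_image, Finset.mem_coe] at hv
      obtain ⟨a, _, rfl⟩ := hv
      exact a.2
    have h2 := HR _ hYV (Finset.finite_toSet _)
    rw [Set.ncard_coe_finset, Finset.card_image_of_injective _ Subtype.val_injective] at h2
    have hset : NL E ↑(s.image (Subtype.val : ↥V → ℕ))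
        = ↑(s.biUnion fun v => (hlf.2 (v : ℕ)).toFinset) := by
      ext u
      simp only [NL, Set.mem_setOf_eq, Finset.mem_coe, Finset.mem_biUnion,
        Set.Finite.mem_toFinset, Finset.coe_image, Set.mem_image]
      constructor
      · rintro ⟨v, ⟨a, ha, rfl⟩, he⟩
        exact ⟨a, ha, he⟩
      · rintro ⟨a, ha, he⟩
        exact ⟨(a : ℕ), ⟨a, ha, rfl⟩, he⟩
    rw [hset, Set.ncard_coe_finset] at h2
    rw [mul_comm] at h2
    exact h2
  obtain ⟨g0, hg0inj, hg0mem⟩ :=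
    (Finset.all_card_le_biUnion_card_iff_exists_injective
      (fun v : ↥V => (hlf.2 (v : ℕ)).toFinset ×ˢ (Finset.univ : Finset (Fin k)))).1 hallR
  have hg0E : ∀ v : ↥V, ((g0 v).1, (v : ℕ)) ∈ E := by
    intro v
    have := hg0mem v
    rw [Finset.mem_product] at this
    exact (hlf.2 (v : ℕ)).mem_toFinset.1 this.1
  have hg0U : ∀ v : ↥V, (g0 v).1 ∈ U := fun v => (hE _ (hg0E v)).1
  -- Step 3: combine via CSB
  set f : ↥U × Fin k → ↥V := fun a => ⟨f0 a, hf0V a⟩ with hfdef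
  set g : ↥V → ↥U × Fin k := fun v => (⟨(g0 v).1, hg0U v⟩, (g0 v).2) with hgdef
  have hfinj : Injective f := fun a a' hee => hf0inj (congrArg Subtype.val hee)
  have hginj : Injective g := by
    intro v v' hee
    apply hg0inj
    have h1 : (g0 v).1 = (g0 v').1 := congrArg (fun p => (p.1 : ℕ)) hee
    have h2 : (g0 v).2 = (g0 v').2 := congrArg (fun p : ↥U × Fin k => p.2) hee
    exact Prod.ext h1 h2
  obtain ⟨h, hbij, hor⟩ := csb_graph f g hfinj hginj
  have hedge : ∀ a : ↥U × Fin k, ((a.1 : ℕ), ((h a : ℕ))) ∈ E := by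
    intro a
    rcases hor a with h1 | h2
    · rw [h1]
      exact hf0E a
    · have h3 : (g0 (h a)).1 = (a.1 : ℕ) := congrArg (fun p => ((p.1 : ↥U) : ℕ)) h2
      rw [← h3]
      exact hg0E (h a)
  refine ⟨{p : ℕ × ℕ | ∃ (hu : p.1 ∈ U) (hv : p.2 ∈ V) (i : Fin k),
    h (⟨p.1, hu⟩, i) = ⟨p.2, hv⟩}, ?_, ?_, ?_⟩
  · rintro ⟨u, v⟩ ⟨hu, hv, i, hi⟩
    have := hedge (⟨u, hu⟩, i)
    rw [hi] at this
    exact this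
  · intro u hu
    have hinj2 : Injective (fun i : Fin k => ((h (⟨u, hu⟩, i)) : ℕ)) := by
      intro i i' hee
      exact congrArg Prod.snd (hbij.1 (Subtype.ext hee))
    have hseteq : {v | (u, v) ∈ {p : ℕ × ℕ | ∃ (hu : p.1 ∈ U) (hv : p.2 ∈ V) (i : Fin k),
        h (⟨p.1, hu⟩, i) = ⟨p.2, hv⟩}}
        = Set.range (fun i : Fin k => ((h (⟨u, hu⟩, i)) : ℕ)) := by
      ext v
      constructor
      · rintro ⟨hu', hv, i, hi⟩
        exact ⟨i, congrArg Subtype.val hi⟩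
      · rintro ⟨i, rfl⟩
        exact ⟨hu, (h (⟨u, hu⟩, i)).2, i, rfl⟩
    rw [hseteq, ← Set.image_univ, Set.ncard_image_of_injective _ hinj2,
      Set.ncard_univ, Nat.card_eq_fintype_card, Fintype.card_fin]
  · intro v hv
    obtain ⟨a, ha⟩ := hbij.2 ⟨v, hv⟩
    refine ⟨(a.1 : ℕ), ⟨a.1.2, hv, a.2, ha⟩, ?_⟩
    rintro u' ⟨hu', hv', i', hi'⟩
    have h5 : ((⟨u', hu'⟩ : ↥U), i') = a := hbij.1 (hi'.trans ha.symm)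
    exact congrArg (fun p : ↥U × Fin k => (p.1 : ℕ)) h5

/-- Hall's Harem theorem. -/
theorem hall_harem (k : ℕ) (hk : 1 ≤ k) (U V : Set ℕ) (E : Set (ℕ × ℕ))
    (hE : ∀ p ∈ E, p.1 ∈ U ∧ p.2 ∈ V)
    (hlf : (∀ u : ℕ, {v | (u, v) ∈ E}.Finite) ∧ (∀ v : ℕ, {u | (u, v) ∈ E}.Finite)) :
    (∃ M, PerfectMatching k U V E M) ↔ HallHarem k U V E := by
  constructor
  · rintro ⟨M, hM⟩
    exact forward_dir k U V E M hE hlf hM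
  · intro HH
    exact backward_dir k hk U V E hE hlf HH
end

section
/- Let Γ = (U, V, E) be a bipartite graph satisfying Hall's d-harem condition with d ≥ 2, let M be a perfect (1,d)-matching of Γ, let u₀ ∈ U and let v₁, …, v_d be the d vertices matched to u₀ by M. Then the graph obtained from Γ by removing the vertices u₀, v₁, …, v_d satisfies Hall's d-harem condition. -/
open Function

/-- Removing a whole fan of a perfect (1,d)-matching preserves Hall's
d-harem condition. -/
theorem remove_fan_hall (d : ℕ) (hd : 2 ≤ d) (U V : Set ℕ) (E M : Set (ℕ × ℕ))
    (hE : ∀ p ∈ E, p.1 ∈ U ∧ p.2 ∈ V)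
    (hHall : HallHarem d U V E)
    (hM : PerfectMatching d U V E M)
    (u₀ : ℕ) (hu₀ : u₀ ∈ U) (S : Set ℕ) (hS : S = {v | (u₀, v) ∈ M}) :
    HallHarem d (U \ {u₀}) (V \ S) {p ∈ E | p.1 ≠ u₀ ∧ p.2 ∉ S} := by
  classical
  obtain ⟨hME, hfan, huniq⟩ := hM
  set E' : Set (ℕ × ℕ) := {p ∈ E | p.1 ≠ u₀ ∧ p.2 ∉ S} with hE'
  -- the matched partner function
  set g : ℕ → ℕ := fun v => if h : ∃ u, (u, v) ∈ M then h.choose else 0 with hgdef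
  have hg : ∀ {u v : ℕ}, (u, v) ∈ M → g v = u ∧ (g v, v) ∈ M := by
    intro u v huv
    have hex : ∃ u, (u, v) ∈ M := ⟨u, huv⟩
    have hgv : (g v, v) ∈ M := by
      simp only [hgdef, dif_pos hex]
      exact hex.choose_spec
    have hvV : v ∈ V := (hE _ (hME huv)).2
    obtain ⟨w, _, hw⟩ := huniq v hvV
    exact ⟨(hw _ hgv).trans (hw _ huv).symm, hgv⟩
  have hSnot : ∀ {u v : ℕ}, (u, v) ∈ M → u ≠ u₀ → v ∉ S := by
    intro u v huv hne hvS
    rw [hS] at hvS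
    have hvV : v ∈ V := (hE _ (hME huv)).2
    obtain ⟨w, _, hw⟩ := huniq v hvV
    exact hne ((hw _ huv).trans (hw _ hvS).symm)
  have hfan' : ∀ u ∈ U, u ≠ u₀ → {v | (u, v) ∈ M}.Finite ∧ {v | (u, v) ∈ M}.ncard = d := by
    intro u huU hne
    have hcard := hfan u huU
    refine ⟨Set.finite_of_ncard_ne_zero (by omega), hcard⟩
  constructor
  · -- left side
    intro X hX hXfin
    rcases X.eq_empty_or_nonempty with rfl | hXne
    · simp
    have hXU : X ⊆ U := fun x hx => ((hX hx).1)
    have h1 := hHall.1 X hXU hXfin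
    have hXpos : 1 ≤ X.ncard := (Set.ncard_pos hXfin).2 hXne
    have hNEfin : (NR E X).Finite := by
      apply Set.finite_of_ncard_ne_zero
      have : 2 ≤ d * X.ncard := le_trans hd (Nat.le_mul_of_pos_right d hXpos)
      omega
    have hNfin : (NR E' X).Finite := by
      refine hNEfin.subset ?_
      rintro v ⟨u, huX, huv⟩
      exact ⟨u, huX, huv.1⟩
    set sX := hXfin.toFinset with hsX
    set sN := hNfin.toFinset with hsN
    set sW : Finset ℕ := sN.filter (fun v => g v ∈ X) with hsW
    have key : d * sX.card ≤ sW.card := by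
      refine Finset.mul_card_image_le_card_of_maps_to
        (f := g) (s := sW) (t := sX) ?_ d ?_
      · intro v hv
        simp only [hsW, Finset.mem_filter] at hv
        exact hXfin.mem_toFinset.2 hv.2
      · intro u hu
        have huX : u ∈ X := hXfin.mem_toFinset.1 hu
        have huU : u ∈ U := (hX huX).1
        have hune : u ≠ u₀ := (hX huX).2
        obtain ⟨hFfin, hFcard⟩ := hfan' u huU hune
        have hsub : hFfin.toFinset ⊆ sW.filter (fun v => g v = u) := by
          intro v hv
          have hvM : (u, v) ∈ M := hFfin.mem_toFinset.1 hv
          have hvS : v ∉ S := hSnot hvM hune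
          have hvE' : (u, v) ∈ E' := ⟨hME hvM, hune, hvS⟩
          have hvN : v ∈ NR E' X := ⟨u, huX, hvE'⟩
          have hgv : g v = u := (hg hvM).1
          simp only [Finset.mem_filter, hsW]
          exact ⟨⟨hNfin.mem_toFinset.2 hvN, hgv ▸ huX⟩, hgv⟩
        calc d = hFfin.toFinset.card := by
                rw [← Set.ncard_eq_toFinset_card _ hFfin, hFcard]
          _ ≤ _ := Finset.card_le_card hsub
    calc d * X.ncard = d * sX.card := by rw [Set.ncard_eq_toFinset_card _ hXfin]
      _ ≤ sW.card := key
      _ ≤ sN.card := Finset.card_le_card (Finset.filter_subset _ _)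
      _ = (NR E' X).ncard := (Set.ncard_eq_toFinset_card _ hNfin).symm
  · -- right side
    intro Y hY hYfin
    have hYV : Y ⊆ V := fun y hy => (hY hy).1
    by_cases hfin : (NL E' Y).Finite
    · set sY := hYfin.toFinset with hsY
      set sL := hfin.toFinset with hsL
      have hmap : ∀ v ∈ sY, g v ∈ sL := by
        intro v hv
        have hvY : v ∈ Y := hYfin.mem_toFinset.1 hv
        have hvV : v ∈ V := (hY hvY).1
        have hvS : v ∉ S := (hY hvY).2
        obtain ⟨u, huv, _⟩ := huniq v hvV
        obtain ⟨hgv, hgM⟩ := hg huv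
        have hne : g v ≠ u₀ := by
          intro h
          apply hvS
          rw [hS]
          exact h ▸ hgM
        have : (g v, v) ∈ E' := ⟨hME hgM, hne, hvS⟩
        exact hfin.mem_toFinset.2 ⟨v, hvY, this⟩
      have key : sY.card ≤ d * sL.card := by
        refine Finset.card_le_mul_card_image_of_maps_to hmap d ?_
        intro u hu
        have hgM : ∀ v ∈ Y, (g v, v) ∈ M := by
          intro v hvY
          obtain ⟨w, hw, _⟩ := huniq v (hY hvY).1
          exact (hg hw).2
        rcases (sY.filter (fun v => g v = u)).eq_empty_or_nonempty with he | ⟨v, hv⟩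
        · simp [he]
        · simp only [Finset.mem_filter] at hv
          have hvY : v ∈ Y := hYfin.mem_toFinset.1 hv.1
          have hvM : (u, v) ∈ M := hv.2 ▸ hgM v hvY
          have huU : u ∈ U := (hE _ (hME hvM)).1
          have hFfin : {w | (u, w) ∈ M}.Finite := by
            apply Set.finite_of_ncard_ne_zero
            rw [hfan u huU]; omega
          have hsub : sY.filter (fun w => g w = u) ⊆ hFfin.toFinset := by
            intro w hw
            simp only [Finset.mem_filter] at hw
            have hwY : w ∈ Y := hYfin.mem_toFinset.1 hw.1
            exact hFfin.mem_toFinset.2 (hw.2 ▸ hgM w hwY)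
          calc (sY.filter (fun w => g w = u)).card
              ≤ hFfin.toFinset.card := Finset.card_le_card hsub
            _ = d := by rw [← Set.ncard_eq_toFinset_card _ hFfin, hfan u huU]
      calc Y.ncard = sY.card := Set.ncard_eq_toFinset_card _ hYfin
        _ ≤ d * sL.card := key
        _ = d * (NL E' Y).ncard := by rw [Set.ncard_eq_toFinset_card _ hfin]
    · have hNEinf : (NL E Y).Infinite := by
        intro hNE
        exact hfin (hNE.subset (by rintro u ⟨v, hvY, huv⟩; exact ⟨v, hvY, huv.1⟩))
      have h2 := hHall.2 Y hYV hYfin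
      rw [hNEinf.ncard] at h2
      omega
end

section
/- Let d ≥ 2 and let Γ = (U, V, E) be a locally finite fully reflected bipartite graph on U = V = ℕ \ {0} with no edges (u, v_u), satisfying Hall's d-harem condition. Then there exists a perfect (1, d−1)-matching of Γ realizing a surjective (d−1)-to-1 function f : ℕ \ {0} → ℕ \ {0} such that every point is eventually periodic under f, i.e., for every n there exist k ≥ 0 and l ≥ 1 with f^{k+l}(n) = f^k(n). -/
open Function

/-!
Hall's theorem, applied to `α → α × Fin k` and to `α × Fin k → α`, and Schröder–Bernstein give a
`k`-to-one map `g` along the symmetric edge relation. Every component of the functional graph of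
`g` without periodic points contains a bi-infinite path `⋯ → a₋₁ → a₀ → a₁ → ⋯` (continue the
forward orbit backwards, by surjectivity). Precomposing `g` with the permutation fixing `a₂ₘ` and
sending `a₂ₘ₊₁` to `a₂ₘ₋₁` turns these paths into 2-cycles `a₂ₘ ⇄ a₂ₘ₊₁`: the new map still
follows edges (by symmetry) and is still `k`-to-one (fibres are only moved by a permutation). Now
every orbit is eventually periodic: it either falls into one of the 2-cycles, or it never meets
the paths, and then its component already had a periodic point and the orbit is unchanged.
-/

open Finset

universe u

variable {α : Type u}

def EventuallyPeriodic (g : α → α) (x : α) : Prop :=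
  ∃ k l, 1 ≤ l ∧ g^[k + l] x = g^[k] x

theorem eventuallyPeriodic_iterate_iff {g : α → α} {x : α} (n : ℕ) :
    EventuallyPeriodic g (g^[n] x) ↔ EventuallyPeriodic g x := by
  constructor
  · rintro ⟨k, l, hl, h⟩
    exact ⟨k + n, l, hl, by rw [add_right_comm, iterate_add_apply g (k + l), h, iterate_add_apply]⟩
  · rintro ⟨k, l, hl, h⟩
    refine ⟨k, l, hl, ?_⟩
    rw [← iterate_add_apply, ← iterate_add_apply, add_comm, iterate_add_apply, h,
      ← iterate_add_apply, add_comm, iterate_add_apply]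

theorem Function.Semiconj.eventuallyPeriodic {β : Type*} {φ : α → β} {f : α → α} {g : β → β}
    (h : Semiconj φ f g) {x : α} (hx : EventuallyPeriodic f x) : EventuallyPeriodic g (φ x) := by
  obtain ⟨k, l, hl, hkl⟩ := hx
  exact ⟨k, l, hl, by rw [← (h.iterate_right _).eq, ← (h.iterate_right _).eq, hkl]⟩

theorem injective_iterate_of_not_eventuallyPeriodic {g : α → α} {x : α}
    (hx : ¬EventuallyPeriodic g x) : Injective fun n => g^[n] x := by
  have key : ∀ p q, p < q → g^[p] x ≠ g^[q] x := fun p q hpq h =>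
    hx ⟨p, q - p, by omega, by rw [Nat.add_sub_cancel' hpq.le, h]⟩
  intro p q h
  by_contra hne
  rcases Nat.lt_or_gt_of_ne hne with hpq | hqp
  · exact key p q hpq h
  · exact key q p hqp h.symm

theorem iterate_eq_of_eqOn_compl {g g' : α → α} {S : Set α} (hgg' : Set.EqOn g' g Sᶜ)
    {x : α} {n : ℕ} (hn : ∀ m < n, g^[m] x ∉ S) : g'^[n] x = g^[n] x := by
  induction n with
  | zero => rfl
  | succ n ih =>
    rw [iterate_succ_apply', iterate_succ_apply', ih fun m hm => hn m (by omega),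
      hgg' (hn n n.lt_succ_self)]

theorem eventuallyPeriodic_of_eqOn_compl {g g' : α → α} {S : Set α}
    (hgg' : Set.EqOn g' g Sᶜ) (hS : ∀ x ∈ S, EventuallyPeriodic g' x) {x : α}
    (hx : (∃ n, g^[n] x ∈ S) ∨ EventuallyPeriodic g x) : EventuallyPeriodic g' x := by
  classical
  by_cases hhit : ∃ n, g^[n] x ∈ S
  · have hfind := iterate_eq_of_eqOn_compl hgg' fun m hm => Nat.find_min hhit hm
    rw [← eventuallyPeriodic_iterate_iff (Nat.find hhit), hfind]
    exact hS _ (Nat.find_spec hhit)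
  · push Not at hhit
    have hagree : ∀ n, g'^[n] x = g^[n] x := fun n =>
      iterate_eq_of_eqOn_compl hgg' fun m _ => hhit m
    obtain ⟨k, l, hl, h⟩ := hx.resolve_left (by simpa using hhit)
    exact ⟨k, l, hl, by rw [hagree, hagree, h]⟩

def orbitMeetSetoid (g : α → α) : Setoid α where
  r x y := ∃ m n, g^[m] x = g^[n] y
  iseqv :=
    { refl := fun _ => ⟨0, 0, rfl⟩
      symm := fun ⟨m, n, h⟩ => ⟨n, m, h.symm⟩
      trans := fun {x y z} ⟨m, n, h⟩ ⟨m', n', h'⟩ => ⟨m' + m, n + n', by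
        rw [iterate_add_apply, h, ← iterate_add_apply, add_comm, iterate_add_apply, h',
          ← iterate_add_apply]⟩ }

theorem eventuallyPeriodic_of_orbitMeet {g : α → α} {x y : α} (h : orbitMeetSetoid g x y)
    (hy : EventuallyPeriodic g y) : EventuallyPeriodic g x := by
  obtain ⟨m, n, hmn⟩ := h
  rwa [← eventuallyPeriodic_iterate_iff m, hmn, eventuallyPeriodic_iterate_iff]

def orbitLine (g h : α → α) (x : α) : ℤ → α
  | (n : ℕ) => g^[n] x
  | .negSucc n => h^[n + 1] x

section OrbitLine

variable {g h : α → α} {x : α}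

@[simp]
theorem orbitLine_natCast (n : ℕ) : orbitLine g h x n = g^[n] x := rfl

theorem semiconj_orbitLine (hgh : RightInverse h g) : Semiconj (orbitLine g h x) (· + 1) g := by
  rintro (n | _ | n)
  · exact iterate_succ_apply' g n x
  · exact (hgh x).symm
  · show h^[n + 1] x = g (h^[n + 2] x)
    rw [iterate_succ_apply' h (n + 1), hgh]

theorem orbitLine_add_natCast (hgh : RightInverse h g) (i : ℤ) (n : ℕ) :
    orbitLine g h x (i + n) = g^[n] (orbitLine g h x i) := by
  rw [← ((semiconj_orbitLine hgh).iterate_right n).eq, add_right_iterate_apply, nsmul_one]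

theorem orbitMeet_orbitLine (hgh : RightInverse h g) (i : ℤ) :
    orbitMeetSetoid g (orbitLine g h x i) x := by
  obtain ⟨n, hn⟩ := Int.eq_ofNat_of_zero_le (by omega : 0 ≤ i + i.natAbs)
  exact ⟨i.natAbs, n, by rw [← orbitLine_add_natCast hgh, hn, orbitLine_natCast]⟩

theorem injective_orbitLine (hgh : RightInverse h g) (hx : ¬EventuallyPeriodic g x) :
    Injective (orbitLine g h x) := by
  intro i j hij
  set t := i.natAbs + j.natAbs
  obtain ⟨p, hp⟩ := Int.eq_ofNat_of_zero_le (by omega : 0 ≤ i + t)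
  obtain ⟨q, hq⟩ := Int.eq_ofNat_of_zero_le (by omega : 0 ≤ j + t)
  have hpq : g^[p] x = g^[q] x := by
    rw [← orbitLine_natCast (h := h), ← orbitLine_natCast (h := h), ← hp, ← hq,
      orbitLine_add_natCast hgh, orbitLine_add_natCast hgh, hij]
  have := injective_iterate_of_not_eventuallyPeriodic hx hpq
  omega

end OrbitLine

def oddShift : Equiv.Perm ℤ where
  toFun i := if Even i then i else i - 2
  invFun i := if Even i then i else i + 2
  left_inv i := by by_cases h : Even i <;> simp [h]
  right_inv i := by by_cases h : Even i <;> simp [h]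

section LineSwap

variable {ι : Type*} {a : ι × ℤ → α} (ha : Injective a)

noncomputable def lineSwap : Equiv.Perm α :=
  Equiv.Perm.viaEmbedding (Equiv.prodCongr (Equiv.refl ι) oddShift) ⟨a, ha⟩

theorem lineSwap_apply_of_notMem {x : α} (hx : x ∉ Set.range a) : lineSwap ha x = x :=
  Equiv.Perm.viaEmbedding_apply_of_notMem _ _ _ hx

variable {g : α → α} (hga : ∀ c i, g (a (c, i)) = a (c, i + 1))
include hga

theorem apply_lineSwap_line (c : ι) (i : ℤ) :
    g (lineSwap ha (a (c, i))) = a (c, if Even i then i + 1 else i - 1) := by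
  have := Equiv.Perm.viaEmbedding_apply (Equiv.prodCongr (Equiv.refl ι) oddShift) ⟨a, ha⟩ (c, i)
  simp only [Embedding.coeFn_mk] at this
  rw [lineSwap, this, Equiv.prodCongr_apply, Prod.map_apply, Equiv.refl_apply, hga]
  by_cases h : Even i
  · simp [oddShift, h]
  · simp [oddShift, h, sub_add]

theorem iterate_two_comp_lineSwap_line (c : ι) (i : ℤ) :
    (g ∘ lineSwap ha)^[2] (a (c, i)) = a (c, i) := by
  by_cases h : Even i <;> simp [apply_lineSwap_line ha hga, h, parity_simps, ← Int.not_even_iff_odd]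

theorem rel_apply_lineSwap {r : α → α → Prop} (hr : ∀ x y, r x y → r y x)
    (hg : ∀ x, r x (g x)) (x : α) : r x (g (lineSwap ha x)) := by
  by_cases hx : x ∈ Set.range a
  · obtain ⟨⟨c, i⟩, rfl⟩ := hx
    rw [apply_lineSwap_line ha hga]
    split_ifs with h
    · exact hga c i ▸ hg _
    · exact hr _ _ (by simpa [hga] using hg (a (c, i - 1)))
  · rw [lineSwap_apply_of_notMem ha hx]
    exact hg x

end LineSwap

theorem exists_lines_of_surjective {g : α → α} (hg : Surjective g) :
    ∃ (ι : Type u) (a : ι × ℤ → α), Injective a ∧ (∀ c i, g (a (c, i)) = a (c, i + 1)) ∧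
      ∀ x, ¬EventuallyPeriodic g x → ∃ n, g^[n] x ∈ Set.range a := by
  have hgh := rightInverse_surjInv hg
  let ι := {c : Quotient (orbitMeetSetoid g) // ¬EventuallyPeriodic g c.out}
  let a : ι × ℤ → α := fun p => orbitLine g (surjInv hg) p.1.1.out p.2
  refine ⟨ι, a, ?_, fun c i => ((semiconj_orbitLine hgh).eq i).symm, fun x hx => ?_⟩
  · rintro ⟨c, i⟩ ⟨c', j⟩ hij
    have hci : orbitMeetSetoid g (a (c, i)) c.1.out := orbitMeet_orbitLine hgh i
    have hcj : orbitMeetSetoid g (a (c', j)) c'.1.out := orbitMeet_orbitLine hgh j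
    rw [hij] at hci
    obtain rfl : c = c' := Subtype.ext <| Quotient.out_equiv_out.1 <|
      (orbitMeetSetoid g).trans' ((orbitMeetSetoid g).symm' hci) hcj
    exact congrArg (c, ·) (injective_orbitLine hgh c.2 hij)
  · have hx' := (orbitMeetSetoid g).symm' (Quotient.mk_out (s := orbitMeetSetoid g) x)
    have hc : ¬EventuallyPeriodic g (⟦x⟧ : Quotient (orbitMeetSetoid g)).out :=
      fun h => hx (eventuallyPeriodic_of_orbitMeet hx' h)
    obtain ⟨m, n, hmn⟩ := hx'
    exact ⟨m, (⟨_, hc⟩, n), hmn.symm⟩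

theorem exists_perm_forall_eventuallyPeriodic {r : α → α → Prop} (hr : ∀ x y, r x y → r y x)
    {g : α → α} (hg : ∀ x, r x (g x)) (hgs : Surjective g) :
    ∃ σ : Equiv.Perm α, (∀ x, r x (g (σ x))) ∧ ∀ x, EventuallyPeriodic (g ∘ σ) x := by
  obtain ⟨ι, a, ha, hga, hhit⟩ := exists_lines_of_surjective hgs
  refine ⟨lineSwap ha, rel_apply_lineSwap ha hga hr hg, fun x => ?_⟩
  refine eventuallyPeriodic_of_eqOn_compl (S := Set.range a)
    (fun y hy => congrArg g (lineSwap_apply_of_notMem ha hy)) ?_ ?_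
  · rintro _ ⟨⟨c, i⟩, rfl⟩
    exact ⟨0, 2, by norm_num, iterate_two_comp_lineSwap_line ha hga c i⟩
  · by_cases hx : EventuallyPeriodic g x
    exacts [Or.inr hx, Or.inl (hhit x hx)]

def IsRegularMapAlong (r : α → α → Prop) (k : ℕ) (g : α → α) : Prop :=
  (∀ x, r x (g x)) ∧ ∀ y, {x | g x = y}.ncard = k

theorem IsRegularMapAlong.surjective {r : α → α → Prop} {k : ℕ} {g : α → α}
    (hg : IsRegularMapAlong r k g) (hk : k ≠ 0) : Surjective g := fun y =>
  Set.nonempty_of_ncard_ne_zero ((hg.2 y).trans_ne hk)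

theorem IsRegularMapAlong.comp_perm {r : α → α → Prop} {k : ℕ} {g : α → α}
    (hg : IsRegularMapAlong r k g) (σ : Equiv.Perm α) (hσ : ∀ x, r x (g (σ x))) :
    IsRegularMapAlong r k (g ∘ σ) :=
  ⟨hσ, fun y => by
    rw [← hg.2 y]
    exact Set.ncard_preimage_of_injective_subset_range (s := {x | g x = y}) σ.injective (by simp)⟩

theorem exists_isRegularMapAlong {r : α → α → Prop} {k : ℕ} (hk : 1 ≤ k)
    (hr : ∀ x y, r x y → r y x) (hfin : ∀ x, {y | r x y}.Finite)
    (hall : ∀ s : Finset α, k * #s ≤ {y | ∃ x ∈ s, r x y}.ncard) :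
    ∃ g, IsRegularMapAlong r k g := by
  classical
  set nbr : α → Finset α := fun x => (hfin x).toFinset
  have hnbr : ∀ s : Finset α, {y | ∃ x ∈ s, r x y}.ncard = #(s.biUnion nbr) := fun s => by
    rw [← Set.ncard_coe_finset]; congr 1; ext; simp [nbr]
  obtain ⟨φ, hφ, hφr⟩ := (Finset.all_card_le_biUnion_card_iff_exists_injective
    fun x => nbr x ×ˢ (Finset.univ : Finset (Fin k))).1 fun s => by
      have : s.biUnion (fun x => nbr x ×ˢ Finset.univ) =
          s.biUnion nbr ×ˢ (Finset.univ : Finset (Fin k)) := by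
        ext; simp
      rw [this, card_product, card_univ, Fintype.card_fin, ← hnbr]
      nlinarith [hall s]
  obtain ⟨ψ, hψ, hψr⟩ := (Finset.all_card_le_biUnion_card_iff_exists_injective
    fun p : α × Fin k => nbr p.1).1 fun s => by
      calc #s ≤ #(s.image Prod.fst ×ˢ (Finset.univ : Finset (Fin k))) :=
            card_le_card fun p hp => by simpa using ⟨p.2, hp⟩
        _ = k * #(s.image Prod.fst) := by simp [mul_comm]
        _ ≤ #(s.biUnion fun p => nbr p.1) := by rw [← image_biUnion, ← hnbr]; exact hall _
  obtain ⟨χ, hχ, hχr⟩ := Embedding.schroeder_bernstein_of_rel hφ hψ (fun x p => r x p.1)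
    (fun x => by simpa [nbr] using (mem_product.1 (hφr x)).1)
    (fun p => hr _ _ (by simpa [nbr] using hψr p))
  refine ⟨fun x => (χ x).1, hχr, fun y => ?_⟩
  let e := Equiv.ofBijective χ hχ
  calc {x | (χ x).1 = y}.ncard = (e ⁻¹' {p | p.1 = y}).ncard := rfl
    _ = {p : α × Fin k | p.1 = y}.ncard := by
      rw [← e.image_symm_eq_preimage, Set.ncard_image_of_injective _ e.symm.injective]
    _ = k := by
      rw [show {p : α × Fin k | p.1 = y} = Set.range (Prod.mk y) by ext ⟨x, i⟩; simp [eq_comm],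
        Set.ncard_range_of_injective (Prod.mk_right_injective y), Nat.card_eq_fintype_card,
        Fintype.card_fin]

theorem exists_isRegularMapAlong_forall_eventuallyPeriodic {r : α → α → Prop} {k : ℕ}
    (hk : 1 ≤ k) (hr : ∀ x y, r x y → r y x) (hfin : ∀ x, {y | r x y}.Finite)
    (hall : ∀ s : Finset α, k * #s ≤ {y | ∃ x ∈ s, r x y}.ncard) :
    ∃ g, IsRegularMapAlong r k g ∧ ∀ x, EventuallyPeriodic g x := by
  obtain ⟨g, hg⟩ := exists_isRegularMapAlong hk hr hfin hall
  obtain ⟨σ, hσ, hper⟩ := exists_perm_forall_eventuallyPeriodic hr hg.1 (hg.surjective (by omega))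
  exact ⟨g ∘ σ, hg.comp_perm σ hσ, hper⟩

theorem perfectMatching_setOf_apply_eq {k : ℕ} {U V : Set ℕ} {E : Set (ℕ × ℕ)} {f : ℕ → ℕ}
    (hfE : ∀ v ∈ V, (f v, v) ∈ E) (hfib : ∀ u ∈ U, {v | v ∈ V ∧ f v = u}.ncard = k) :
    PerfectMatching k U V E {p | p.2 ∈ V ∧ f p.2 = p.1} :=
  ⟨fun p ⟨hp, hfp⟩ => by rw [← Prod.mk.eta (p := p), ← hfp]; exact hfE _ hp, hfib,
    fun v hv => ⟨f v, ⟨hv, rfl⟩, fun _ hu => hu.2.symm⟩⟩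

theorem NR_image_val {S : Set ℕ} {E : Set (ℕ × ℕ)} (hE : ∀ p ∈ E, p.2 ∈ S) (X : Set S) :
    NR E (Subtype.val '' X) = Subtype.val '' {y : S | ∃ x ∈ X, ((x : ℕ), (y : ℕ)) ∈ E} := by
  ext v
  constructor
  · rintro ⟨_, ⟨x, hx, rfl⟩, hxv⟩
    exact ⟨⟨v, hE _ hxv⟩, ⟨x, hx, hxv⟩, rfl⟩
  · rintro ⟨y, ⟨x, hx, hxy⟩, rfl⟩
    exact ⟨x, ⟨x, hx, rfl⟩, hxy⟩

theorem mul_card_le_ncard_of_hallHarem {d : ℕ} {S : Set ℕ} {E : Set (ℕ × ℕ)}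
    (hE : ∀ p ∈ E, p.2 ∈ S) (hHall : HallHarem d S S E) (s : Finset S) :
    d * #s ≤ {y : S | ∃ x ∈ s, ((x : ℕ), (y : ℕ)) ∈ E}.ncard := by
  have := hHall.1 _ (Subtype.coe_image_subset S s) (s.finite_toSet.image _)
  rwa [NR_image_val hE, Set.ncard_image_of_injective _ Subtype.val_injective,
    Set.ncard_image_of_injective _ Subtype.val_injective, Set.ncard_coe_finset] at this

theorem setOf_mem_and_eq_eq_image_val {β : Type*} {S : Set β} {F : S → S} {f : β → β}
    (hfF : Semiconj Subtype.val F f) {u : β} (hu : u ∈ S) :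
    {v | v ∈ S ∧ f v = u} = Subtype.val '' {x | F x = ⟨u, hu⟩} := by
  ext v
  constructor
  · rintro ⟨hv, rfl⟩
    exact ⟨⟨v, hv⟩, Subtype.ext (hfF ⟨v, hv⟩), rfl⟩
  · rintro ⟨x, hx, rfl⟩
    exact ⟨x.2, (hfF x).symm.trans (congrArg Subtype.val hx)⟩

theorem main_theorem_weak_general (d : ℕ) (hd : 2 ≤ d) (E : Set (ℕ × ℕ))
    (hE : ∀ p ∈ E, 1 ≤ p.1 ∧ 1 ≤ p.2)
    (hlf : (∀ u : ℕ, {v | (u, v) ∈ E}.Finite) ∧ (∀ v : ℕ, {u | (u, v) ∈ E}.Finite))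
    (href : ∀ u v : ℕ, (u, v) ∈ E → (v, u) ∈ E)
    (hHall : HallHarem d {n | 1 ≤ n} {n | 1 ≤ n} E) :
    ∃ (M : Set (ℕ × ℕ)) (f : ℕ → ℕ),
      PerfectMatching (d - 1) {n | 1 ≤ n} {n | 1 ≤ n} E M ∧
      (∀ v : ℕ, 1 ≤ v → (f v, v) ∈ M) ∧
      (∀ u : ℕ, 1 ≤ u → {v | 1 ≤ v ∧ f v = u}.ncard = d - 1) ∧
      (∀ n : ℕ, 1 ≤ n → ∃ k l, 1 ≤ l ∧ f^[k + l] n = f^[k] n) := by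
  set S : Set ℕ := {n | 1 ≤ n}
  obtain ⟨F, ⟨hFE, hFfib⟩, hFper⟩ := exists_isRegularMapAlong_forall_eventuallyPeriodic
    (r := fun x y : S => ((x : ℕ), (y : ℕ)) ∈ E) (k := d - 1) (by omega)
    (fun _ _ h => href _ _ h)
    (fun x => (hlf.1 x).preimage (f := Subtype.val) Subtype.val_injective.injOn)
    fun s => (Nat.mul_le_mul_right _ (Nat.sub_le d 1)).trans
      (mul_card_le_ncard_of_hallHarem (fun p hp => (hE p hp).2) hHall s)
  set f := extend Subtype.val (fun x : S => (F x : ℕ)) id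
  have hfF : Semiconj Subtype.val F f := fun x =>
    (Subtype.val_injective.extend_apply (fun x : S => (F x : ℕ)) id x).symm
  have hfib (u : ℕ) (hu : u ∈ S) : {v | v ∈ S ∧ f v = u}.ncard = d - 1 := by
    rw [setOf_mem_and_eq_eq_image_val hfF hu, Set.ncard_image_of_injective _ Subtype.val_injective]
    exact hFfib _
  refine ⟨_, f, perfectMatching_setOf_apply_eq (fun v hv => ?_) hfib, fun v hv => ⟨hv, rfl⟩, hfib,
    fun n hn => hfF.eventuallyPeriodic (hFper ⟨n, hn⟩)⟩
  exact href _ _ ((hfF ⟨v, hv⟩) ▸ hFE ⟨v, hv⟩)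

/-- Weak form of the main theorem: a perfect (1,d-1)-matching whose function
makes every point eventually periodic. -/
theorem main_theorem_weak (d : ℕ) (hd : 2 ≤ d) (E : Set (ℕ × ℕ))
    (hE : ∀ p ∈ E, 1 ≤ p.1 ∧ 1 ≤ p.2)
    (hlf : (∀ u : ℕ, {v | (u, v) ∈ E}.Finite) ∧ (∀ v : ℕ, {u | (u, v) ∈ E}.Finite))
    (href : ∀ u v : ℕ, (u, v) ∈ E → (v, u) ∈ E)
    (hirr : ∀ u : ℕ, (u, u) ∉ E)
    (hHall : HallHarem d {n | 1 ≤ n} {n | 1 ≤ n} E) :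
    ∃ (M : Set (ℕ × ℕ)) (f : ℕ → ℕ),
      PerfectMatching (d - 1) {n | 1 ≤ n} {n | 1 ≤ n} E M ∧
      (∀ v : ℕ, 1 ≤ v → (f v, v) ∈ M) ∧
      (∀ u : ℕ, 1 ≤ u → {v | 1 ≤ v ∧ f v = u}.ncard = d - 1) ∧
      (∀ n : ℕ, 1 ≤ n → ∃ k l, 1 ≤ l ∧ f^[k + l] n = f^[k] n) :=
  main_theorem_weak_general d hd E hE hlf href hHall
end
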